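/- Let V be a finite set of nodes, E ⊆ V × V a finite set of directed edges, p : E → ℝ with 0 ≤ p(e) ≤ 1 for all e ∈ E, S ⊆ V a seed set, and α, β positive integers. Define the defender's expected utility ρ(M) = Σ_{X ⊆ E} Pr_p[X] · ρ^X_S(M). Then ρ is submodular as a function of the monitor set M: for all A ⊆ B ⊆ V and every v ∈ V, ρ(A ∪ {v}) − ρ(A) ≥ ρ(B ∪ {v}) − ρ(B). -/
import Mathlib


open scoped Classical

/-- The infected sets of the live-edge diffusion process:
`I_S(0) = S` and `I_S(t+1) = I_S(t) ∪ {w : ∃ v ∈ I_S(t), (v,w) ∈ X}`. -/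
noncomputable def infect {V : Type*} [Fintype V] [DecidableEq V]
    (X : Finset (V × V)) (S : Finset V) : ℕ → Finset V
  | 0 => S
  | t + 1 => infect X S t ∪
      Finset.univ.filter (fun w => ∃ v ∈ infect X S t, (v, w) ∈ X)

/-- The set of nodes reachable from `S` via live edges of `X`. -/
noncomputable def reachSet {V : Type*} [Fintype V] [DecidableEq V]
    (X : Finset (V × V)) (S : Finset V) : Finset V :=
  Finset.univ.filter (fun u => ∃ t, u ∈ infect X S t)

/-- The monitor set `M` detects the outbreak before `β`: there exists `t` with
`M ∩ I_S(t) ≠ ∅` and `|I_S(t)| ≤ β`. -/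
def detects {V : Type*} [Fintype V] [DecidableEq V]
    (X : Finset (V × V)) (S : Finset V) (β : ℕ) (M : Finset V) : Prop :=
  ∃ t, (M ∩ infect X S t).Nonempty ∧ (infect X S t).card ≤ β

/-- The defender win indicator `ρ^X_S(M)`: equal to `1` if either the set of
nodes reachable from `S` via live edges of `X` has size less than `α`, or `M`
detects the outbreak before `β`; and `0` otherwise. -/
noncomputable def rho {V : Type*} [Fintype V] [DecidableEq V]
    (X : Finset (V × V)) (S : Finset V) (α β : ℕ) (M : Finset V) : ℝ :=
  if (reachSet X S).card < α ∨ detects X S β M then 1 else 0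

/-- The live-edge probability `Pr_p[X] = (∏_{e ∈ X} p e) · (∏_{e ∈ E \ X} (1 - p e))`. -/
noncomputable def liveProb {ι : Type*} [DecidableEq ι]
    (E : Finset ι) (p : ι → ℝ) (X : Finset ι) : ℝ :=
  (∏ e ∈ X, p e) * (∏ e ∈ E \ X, (1 - p e))

lemma detects_mono {V : Type*} [Fintype V] [DecidableEq V]
    {X : Finset (V × V)} {S : Finset V} {β : ℕ} {M M' : Finset V}
    (h : M ⊆ M') : detects X S β M → detects X S β M' := by
  rintro ⟨t, ⟨x, hx⟩, hc⟩
  have hx' := Finset.mem_inter.mp hx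
  exact ⟨t, ⟨x, Finset.mem_inter.mpr ⟨h hx'.1, hx'.2⟩⟩, hc⟩

lemma rho_submod {V : Type*} [Fintype V] [DecidableEq V]
    (X : Finset (V × V)) (S : Finset V) (α β : ℕ) {A B : Finset V}
    (hAB : A ⊆ B) (v : V) :
    rho X S α β (insert v B) - rho X S α β B ≤
      rho X S α β (insert v A) - rho X S α β A := by
  unfold rho
  by_cases hB : (reachSet X S).card < α ∨ detects X S β B
  · have hB' : (reachSet X S).card < α ∨ detects X S β (insert v B) :=
      hB.imp id (detects_mono (Finset.subset_insert v B))
    rw [if_pos hB, if_pos hB']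
    have hmono : ∀ (P Q : Prop), (P → Q) →
        (if (reachSet X S).card < α ∨ P then (1:ℝ) else 0) ≤
          (if (reachSet X S).card < α ∨ Q then (1:ℝ) else 0) := by
      intro P Q hpq
      split_ifs with h1 h2
      · exact le_rfl
      · exact absurd (h1.imp id hpq) h2
      · norm_num
      · exact le_rfl
    have := hmono (detects X S β A) (detects X S β (insert v A))
      (detects_mono (Finset.subset_insert v A))
    linarith
  · have hBd : ¬ detects X S β B := fun h => hB (Or.inr h)
    have hA : ¬ detects X S β A := fun h => hBd (detects_mono hAB h)
    have hAor : ¬ ((reachSet X S).card < α ∨ detects X S β A) := by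
      rintro (h | h); exacts [hB (Or.inl h), hA h]
    rw [if_neg hB, if_neg hAor]
    by_cases hBv : detects X S β (insert v B)
    · have hAv : detects X S β (insert v A) := by
        obtain ⟨t, ⟨x, hx⟩, hc⟩ := hBv
        have hx' := Finset.mem_inter.mp hx
        rcases Finset.mem_insert.mp hx'.1 with rfl | hxB
        · exact ⟨t, ⟨x, Finset.mem_inter.mpr ⟨Finset.mem_insert_self x A, hx'.2⟩⟩, hc⟩
        · exact absurd ⟨t, ⟨x, Finset.mem_inter.mpr ⟨hxB, hx'.2⟩⟩, hc⟩ hBd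
      rw [if_pos (Or.inr hBv), if_pos (Or.inr hAv)]
    · rw [if_neg (by rintro (h | h); exacts [hAor (Or.inl h), hBv h])]
      split_ifs <;> norm_num

/-- The defender's expected utility `ρ(M) = Σ_{X ⊆ E} Pr_p[X] · ρ^X_S(M)` is
submodular in the monitor set. -/
theorem stmt3 {V : Type*} [Fintype V] [DecidableEq V]
    (E : Finset (V × V)) (p : V × V → ℝ) (hp : ∀ e ∈ E, 0 ≤ p e ∧ p e ≤ 1)
    (S : Finset V) (α β : ℕ) (hα : 0 < α) (hβ : 0 < β)
    (A B : Finset V) (hAB : A ⊆ B) (v : V) :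
    (∑ X ∈ E.powerset, liveProb E p X * rho X S α β (insert v A)) -
        (∑ X ∈ E.powerset, liveProb E p X * rho X S α β A) ≥
      (∑ X ∈ E.powerset, liveProb E p X * rho X S α β (insert v B)) -
        (∑ X ∈ E.powerset, liveProb E p X * rho X S α β B) := by
  have hlp : ∀ X ∈ E.powerset, 0 ≤ liveProb E p X := by
    intro X hX
    rw [Finset.mem_powerset] at hX
    exact mul_nonneg
      (Finset.prod_nonneg fun e he => (hp e (hX he)).1)
      (Finset.prod_nonneg fun e he => by
        have := (hp e (Finset.mem_sdiff.mp he).1).2; linarith)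
  rw [← Finset.sum_sub_distrib, ← Finset.sum_sub_distrib]
  apply Finset.sum_le_sum
  intro X hX
  rw [← mul_sub, ← mul_sub]
  apply mul_le_mul_of_nonneg_left _ (hlp X hX)
  exact rho_submod X S α β hAB v
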